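/- Riccati asymptotics at the vertex (flat limit of tr χ): Let s₀ > 0, let h : (0,s₀] → ℝ be continuous and bounded, and let φ : (0,s₀] → ℝ be differentiable and satisfy φ′(s) + (1/2)φ(s)² + h(s) = 0 for all s ∈ (0,s₀], together with lim_{s→0⁺} s·φ(s) = 2. Then lim_{s→0⁺} (φ(s) − 2/s) = 0. -/

import Mathlib

/-!
Put `w(s) = s φ(s) - 2` and `|h| ≤ C`. The function `s w(s) = s² φ(s) - 2s` tends to `0` at the
vertex and, by the Riccati equation, has derivative `-w²/2 - s² h`; integrating from the vertex
shows that `|w| ≤ M` on `(0, s]` forces `|w(s)| ≤ M²/2 + C s²`. Choosing `M` the supremum of `|w|`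
on `(0, s]`, which is at most `1` for small `s`, gives `M ≤ M/2 + C s²`, so `|w(s)| ≤ 2 C s²` and
`|φ(s) - 2/s| = |w(s)|/s ≤ 2 C s`.
-/

open Filter Set Topology

theorem hasDerivWithinAt_riccati_defect {φ : ℝ → ℝ} {S : Set ℝ} {t q : ℝ}
    (hφ : HasDerivWithinAt φ (-((1/2) * (φ t)^2 + q)) S t) :
    HasDerivWithinAt (fun t => t * (t * φ t - 2)) (-((t * φ t - 2)^2 / 2) - t^2 * q) S t := by
  have hid : HasDerivWithinAt (fun t : ℝ => t) 1 S t := (hasDerivAt_id' t).hasDerivWithinAt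
  refine (hid.mul ((hid.mul hφ).sub_const 2)).congr_deriv ?_
  simp only [Pi.mul_apply]
  ring

theorem norm_le_mul_of_tendsto_zero_of_norm_deriv_le {E : Type*} [NormedAddCommGroup E]
    [NormedSpace ℝ E] {f f' : ℝ → E} {s K : ℝ} (hs : 0 < s) (hf0 : Tendsto f (𝓝[>] 0) (𝓝 0))
    (hf : ∀ t ∈ Ioc 0 s, HasDerivWithinAt f (f' t) (Ioc 0 s) t)
    (hK : ∀ t ∈ Ioc 0 s, ‖f' t‖ ≤ K) :
    ‖f s‖ ≤ K * s := by
  have hincr : ∀ v ∈ Ioc 0 s, ‖f s‖ ≤ K * (s - v) + ‖f v‖ := by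
    intro v hv
    have hsub : Icc v s ⊆ Ioc 0 s := Icc_subset_Ioc hv.1 le_rfl
    have hmvt := (convex_Icc v s).norm_image_sub_le_of_norm_hasDerivWithin_le
      (fun t ht => (hf t (hsub ht)).mono hsub) (fun t ht => hK t (hsub ht))
      (left_mem_Icc.mpr hv.2) (right_mem_Icc.mpr hv.2)
    rw [Real.norm_of_nonneg (sub_nonneg.mpr hv.2)] at hmvt
    calc ‖f s‖ ≤ ‖f s - f v‖ + ‖f v‖ := norm_le_norm_sub_add _ _
      _ ≤ K * (s - v) + ‖f v‖ := by gcongr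
  have hlim : Tendsto (fun v => K * (s - v) + ‖f v‖) (𝓝[>] 0) (𝓝 (K * (s - 0) + ‖(0 : E)‖)) :=
    ((tendsto_const_nhds.sub (tendsto_id.mono_left nhdsWithin_le_nhds)).const_mul K).add
      hf0.norm
  simpa using ge_of_tendsto hlim (eventually_of_mem (Ioc_mem_nhdsGT hs) hincr)

theorem abs_mul_sub_two_le_of_riccati {φ h : ℝ → ℝ} {s C M : ℝ} (hs : 0 < s)
    (hC : ∀ t ∈ Ioc 0 s, |h t| ≤ C)
    (hode : ∀ t ∈ Ioc 0 s, HasDerivWithinAt φ (-((1/2) * (φ t)^2 + h t)) (Ioc 0 s) t)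
    (hinit : Tendsto (fun t => t * φ t) (𝓝[>] 0) (𝓝 2))
    (hM : ∀ t ∈ Ioc 0 s, |t * φ t - 2| ≤ M) :
    |s * φ s - 2| ≤ M ^ 2 / 2 + C * s ^ 2 := by
  have hg0 : Tendsto (fun t => t * (t * φ t - 2)) (𝓝[>] 0) (𝓝 0) := by
    simpa using (tendsto_id.mono_left nhdsWithin_le_nhds).mul (hinit.sub_const 2)
  have hbound : ∀ t ∈ Ioc 0 s,
      ‖-((t * φ t - 2)^2 / 2) - t^2 * h t‖ ≤ M ^ 2 / 2 + C * s ^ 2 := by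
    intro t ht
    have hw : (t * φ t - 2)^2 ≤ M ^ 2 := sq_le_sq' (abs_le.mp (hM t ht)).1 (abs_le.mp (hM t ht)).2
    have ht2 : t ^ 2 ≤ s ^ 2 := pow_le_pow_left₀ ht.1.le ht.2 2
    calc ‖-((t * φ t - 2)^2 / 2) - t^2 * h t‖
        ≤ (t * φ t - 2)^2 / 2 + t^2 * |h t| := by
          rw [Real.norm_eq_abs]
          refine (abs_sub _ _).trans_eq ?_
          rw [abs_neg, abs_mul, abs_of_nonneg (by positivity), abs_of_nonneg (by positivity)]
      _ ≤ M ^ 2 / 2 + s ^ 2 * C := by gcongr; exact hC t ht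
      _ = M ^ 2 / 2 + C * s ^ 2 := by ring
  have hg := norm_le_mul_of_tendsto_zero_of_norm_deriv_le hs hg0
    (fun t ht => hasDerivWithinAt_riccati_defect (hode t ht)) hbound
  rw [Real.norm_eq_abs, abs_mul, abs_of_pos hs, mul_comm] at hg
  exact le_of_mul_le_mul_right hg hs

theorem le_two_mul_of_forall_le_sq_half_add {A : Set ℝ} {c : ℝ}
    (hA : ∀ x ∈ A, 0 ≤ x ∧ x ≤ 1)
    (hstep : ∀ M, (∀ x ∈ A, x ≤ M) → ∀ x ∈ A, x ≤ M ^ 2 / 2 + c) :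
    ∀ x ∈ A, x ≤ 2 * c := by
  intro x hx
  have hbdd : BddAbove A := ⟨1, fun y hy => (hA y hy).2⟩
  have hxM : x ≤ sSup A := le_csSup hbdd hx
  have hM1 : sSup A ≤ 1 := csSup_le ⟨x, hx⟩ fun y hy => (hA y hy).2
  have hM : sSup A ≤ sSup A ^ 2 / 2 + c :=
    csSup_le ⟨x, hx⟩ (hstep _ fun y hy => le_csSup hbdd hy)
  nlinarith [(hA x hx).1]

theorem abs_mul_sub_two_le_two_mul_sq_of_riccati {φ h : ℝ → ℝ} {δ C : ℝ}
    (hC : ∀ t ∈ Ioc 0 δ, |h t| ≤ C)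
    (hode : ∀ t ∈ Ioc 0 δ, HasDerivWithinAt φ (-((1/2) * (φ t)^2 + h t)) (Ioc 0 δ) t)
    (hinit : Tendsto (fun t => t * φ t) (𝓝[>] 0) (𝓝 2))
    (hsmall : ∀ t ∈ Ioc 0 δ, |t * φ t - 2| ≤ 1) :
    ∀ s ∈ Ioc 0 δ, |s * φ s - 2| ≤ 2 * (C * s ^ 2) := by
  intro s hs
  have hsub : Ioc 0 s ⊆ Ioc 0 δ := Ioc_subset_Ioc_right hs.2
  refine le_two_mul_of_forall_le_sq_half_add (A := (fun t => |t * φ t - 2|) '' Ioc 0 s)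
    (forall_mem_image.mpr fun t ht => ⟨abs_nonneg _, hsmall t (hsub ht)⟩)
    (fun M hM => forall_mem_image.mpr fun t ht => ?_) _ (mem_image_of_mem _ ⟨hs.1, le_rfl⟩)
  have hsubt : Ioc 0 t ⊆ Ioc 0 s := Ioc_subset_Ioc_right ht.2
  have hC0 : 0 ≤ C := (abs_nonneg _).trans (hC s hs)
  calc |t * φ t - 2| ≤ M ^ 2 / 2 + C * t ^ 2 :=
        abs_mul_sub_two_le_of_riccati ht.1 (fun r hr => hC r (hsub (hsubt hr)))
          (fun r hr => (hode r (hsub (hsubt hr))).mono (hsub.trans' hsubt)) hinit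
          fun r hr => hM _ (mem_image_of_mem _ (hsubt hr))
    _ ≤ M ^ 2 / 2 + C * s ^ 2 := by gcongr; exacts [ht.1.le, ht.2]

theorem riccati_vertex_asymptotics_general
    (s₀ : ℝ) (hs₀ : 0 < s₀) (h φ : ℝ → ℝ)
    (hbdd : ∃ C : ℝ, ∀ s ∈ Set.Ioc (0:ℝ) s₀, |h s| ≤ C)
    (hode : ∀ s ∈ Set.Ioc (0:ℝ) s₀,
      HasDerivWithinAt φ (-((1/2) * (φ s)^2 + h s)) (Set.Ioc 0 s₀) s)
    (hinit : Tendsto (fun s => s * φ s) (nhdsWithin 0 (Set.Ioi 0)) (nhds 2)) :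
    Tendsto (fun s => φ s - 2 / s) (nhdsWithin 0 (Set.Ioi 0)) (nhds 0) := by
  obtain ⟨C, hC⟩ := hbdd
  obtain ⟨δ, hδ, hsmall⟩ : ∃ δ ∈ Ioc 0 s₀, ∀ t ∈ Ioc 0 δ, |t * φ t - 2| ≤ 1 := by
    have hev : ∀ᶠ t in 𝓝[>] 0, |t * φ t - 2| ≤ 1 :=
      (hinit.sub_const 2).abs.eventually (ge_mem_nhds (by norm_num))
    obtain ⟨u, hu, hsub⟩ := mem_nhdsGT_iff_exists_Ioc_subset.mp hev
    exact ⟨min s₀ u, ⟨lt_min hs₀ hu, min_le_left _ _⟩,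
      fun t ht => hsub (Ioc_subset_Ioc_right (min_le_right _ _) ht)⟩
  have hsub : Ioc 0 δ ⊆ Ioc 0 s₀ := Ioc_subset_Ioc_right hδ.2
  have hquad := abs_mul_sub_two_le_two_mul_sq_of_riccati (fun t ht => hC t (hsub ht))
    (fun t ht => (hode t (hsub ht)).mono hsub) hinit hsmall
  have hlin : Tendsto (fun s => 2 * C * s) (𝓝[>] 0) (𝓝 0) := by
    simpa using ((tendsto_id (x := 𝓝 (0:ℝ))).mono_left nhdsWithin_le_nhds).const_mul (2 * C)
  refine squeeze_zero_norm' ?_ hlin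
  filter_upwards [Ioc_mem_nhdsGT hδ.1] with s hs
  calc ‖φ s - 2 / s‖ = |s * φ s - 2| / s := by
        have e : s * φ s - 2 = s * (φ s - 2 / s) := by field_simp [hs.1.ne']
        rw [e, abs_mul, abs_of_pos hs.1, mul_div_cancel_left₀ _ hs.1.ne', Real.norm_eq_abs]
    _ ≤ 2 * (C * s ^ 2) / s := div_le_div_of_nonneg_right (hquad s hs) hs.1.le
    _ = 2 * C * s := by field_simp

theorem riccati_vertex_asymptotics
    (s₀ : ℝ) (hs₀ : 0 < s₀) (h φ : ℝ → ℝ)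
    (hcont : ContinuousOn h (Set.Ioc 0 s₀))
    (hbdd : ∃ C : ℝ, ∀ s ∈ Set.Ioc (0:ℝ) s₀, |h s| ≤ C)
    (hode : ∀ s ∈ Set.Ioc (0:ℝ) s₀,
      HasDerivWithinAt φ (-((1/2) * (φ s)^2 + h s)) (Set.Ioc 0 s₀) s)
    (hinit : Tendsto (fun s => s * φ s) (nhdsWithin 0 (Set.Ioi 0)) (nhds 2)) :
    Tendsto (fun s => φ s - 2 / s) (nhdsWithin 0 (Set.Ioi 0)) (nhds 0) :=
  riccati_vertex_asymptotics_general s₀ hs₀ h φ hbdd hode hinit
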